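/- arXiv:1611.09719 — 3 statements merged into one kernel-verified Lean document; each statement's English description precedes it below -/
import Mathlib

section
/- Let ζ ≤ 0 and C > 0, and let K : ℝ² → ℝ be such that for every multi-index k = (k₀,k₁) ∈ ℕ² with 2k₀ + k₁ ≤ 4 the partial derivative D^k K := ∂_t^{k₀} ∂_x^{k₁} K exists on ℝ² \ {0} and satisfies |D^k K(t,x)| ≤ C (|t|^{1/2} ∨ |x|)^{ζ − 2k₀ − k₁} for all (t,x) ≠ 0. Then there is a constant C′, depending only on ζ, such that for every β ∈ [0,2], every s, t ∈ ℝ and every x ≠ 0: |K(t−s, x) − 2 K(0, x) + K(s−t, x)| ≤ C′ C |t−s|^β |x|^{ζ − 2β}. -/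
/-!
Along the fibre `{x = const}` with `x ≠ 0` the parabolic norm is at least `|x|`, so the
hypotheses give `|K(·, x)| ≤ C |x|^ζ` and `|∂ₜ² K(·, x)| ≤ C |x|^{ζ-4}`. The second symmetric
difference `δ²K = K(h) - 2K(0) + K(-h)` is therefore bounded both by `4C|x|^ζ` and, by the mean
value theorem applied twice, by `2C|x|^{ζ-4} h²`. Writing `r = |h| / x²`, this is
`4C|x|^ζ · min(r², 1)`, and `min(r², 1) ≤ r^β` for `β ∈ [0, 2]` interpolates between the two.
-/

open Real

noncomputable section

/-- The parabolic norm `‖(t,x)‖_s = |t|^{1/2} ∨ |x|`. -/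
def pNorm (t x : ℝ) : ℝ := max (Real.sqrt |t|) |x|

lemma rpow_pNorm_le_abs_rpow {e : ℝ} (he : e ≤ 0) (t : ℝ) {x : ℝ} (hx : x ≠ 0) :
    pNorm t x ^ e ≤ |x| ^ e :=
  rpow_le_rpow_of_nonpos (abs_pos.mpr hx) (le_max_right _ _) he

section SecondDifference

variable {E : Type*} [NormedAddCommGroup E] [NormedSpace ℝ E] {f f' f'' : ℝ → E}

lemma norm_second_diff_le_of_norm_le {B : ℝ} (hf : ∀ u, ‖f u‖ ≤ B) (h : ℝ) :
    ‖f h - (2 : ℝ) • f 0 + f (-h)‖ ≤ 4 * B :=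
  calc ‖f h - (2 : ℝ) • f 0 + f (-h)‖ = ‖f h + -((2 : ℝ) • f 0) + f (-h)‖ := by
        rw [sub_eq_add_neg]
    _ ≤ ‖f h‖ + ‖-((2 : ℝ) • f 0)‖ + ‖f (-h)‖ := norm_add₃_le
    _ ≤ B + 2 * B + B := by
        rw [norm_neg, norm_smul, Real.norm_two]
        gcongr <;> exact hf _
    _ = 4 * B := by ring

lemma norm_sub_le_of_hasDerivAt_of_norm_le (hf : ∀ u, HasDerivAt f (f' u) u) {M : ℝ}
    (hM : ∀ u, ‖f' u‖ ≤ M) (u v : ℝ) : ‖f u - f v‖ ≤ M * |u - v| :=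
  convex_univ.norm_image_sub_le_of_norm_hasDerivWithin_le
    (fun w _ => (hf w).hasDerivWithinAt) (fun w _ => hM w) (Set.mem_univ v) (Set.mem_univ u)

/-- The function `v ↦ f v + f (-v)` has derivative `f' v - f' (-v)` of size at most `2M|v|`,
and it takes the value `2 f 0` at `0`. -/
lemma norm_second_diff_le_of_hasDerivAt (hf : ∀ u, HasDerivAt f (f' u) u)
    (hf' : ∀ u, HasDerivAt f' (f'' u) u) {M : ℝ} (hM : ∀ u, ‖f'' u‖ ≤ M) (h : ℝ) :
    ‖f h - (2 : ℝ) • f 0 + f (-h)‖ ≤ 2 * M * h ^ 2 := by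
  have hM0 : 0 ≤ M := (norm_nonneg _).trans (hM 0)
  have hsymm : ∀ v, HasDerivAt (fun w => f w + f (-w)) (f' v - f' (-v)) v := fun v => by
    have hreflect : HasDerivAt (fun w => f (-w)) (-f' (-v)) v :=
      ((hf (-v)).scomp v (hasDerivAt_neg v)).congr_deriv (by simp)
    exact ((hf v).add hreflect).congr_deriv (sub_eq_add_neg _ _).symm
  have hsymm_bound : ∀ v ∈ Set.Icc (-|h|) |h|, ‖f' v - f' (-v)‖ ≤ 2 * M * |h| := by
    intro v hv
    calc ‖f' v - f' (-v)‖ ≤ M * |v - -v| := norm_sub_le_of_hasDerivAt_of_norm_le hf' hM v (-v)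
      _ = 2 * M * |v| := by rw [sub_neg_eq_add, ← two_mul, abs_mul, abs_two]; ring
      _ ≤ 2 * M * |h| := mul_le_mul_of_nonneg_left (abs_le.mpr hv) (by linarith)
  have hmvt := (convex_Icc (-|h|) |h|).norm_image_sub_le_of_norm_hasDerivWithin_le
    (fun v _ => (hsymm v).hasDerivWithinAt) hsymm_bound
    ⟨by linarith [abs_nonneg h], abs_nonneg h⟩ ⟨neg_abs_le h, le_abs_self h⟩
  calc ‖f h - (2 : ℝ) • f 0 + f (-h)‖ = ‖(f h + f (-h)) - (f 0 + f (-0))‖ := by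
        rw [neg_zero, two_smul]; abel_nf
    _ ≤ 2 * M * |h| * ‖h - 0‖ := hmvt
    _ = 2 * M * h ^ 2 := by rw [sub_zero, Real.norm_eq_abs, mul_assoc, ← sq, sq_abs]

end SecondDifference

lemma min_sq_one_le_rpow {r β : ℝ} (hr : 0 ≤ r) (hβ : β ∈ Set.Icc (0 : ℝ) 2) :
    min (r ^ 2) 1 ≤ r ^ β := by
  rcases le_total r 1 with hr1 | hr1
  · refine (min_le_left _ _).trans ?_
    rw [← rpow_two]
    exact rpow_le_rpow_of_exponent_ge' hr hr1 hβ.1 hβ.2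
  · exact (min_le_right _ _).trans (one_le_rpow hr1 hβ.1)

lemma min_rpow_le_rpow_mul_rpow {X : ℝ} (hX : 0 < X) (ζ h : ℝ) {β : ℝ}
    (hβ : β ∈ Set.Icc (0 : ℝ) 2) :
    min (X ^ (ζ - 4) * h ^ 2) (X ^ ζ) ≤ |h| ^ β * X ^ (ζ - 2 * β) := by
  have hX2 : 0 < X ^ 2 := by positivity
  have hsq : X ^ (ζ - 4) * h ^ 2 = (|h| / X ^ 2) ^ 2 * X ^ ζ := by
    rw [rpow_sub hX, div_pow, sq_abs, ← pow_mul, show (4 : ℝ) = ((2 * 2 : ℕ) : ℝ) by norm_num,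
      rpow_natCast]
    field_simp
  have hrpow : (|h| / X ^ 2) ^ β * X ^ ζ = |h| ^ β * X ^ (ζ - 2 * β) := by
    rw [div_rpow (abs_nonneg h) hX2.le, ← rpow_natCast, ← rpow_mul hX.le, rpow_sub hX]
    push_cast
    field_simp
  calc min (X ^ (ζ - 4) * h ^ 2) (X ^ ζ)
      = min ((|h| / X ^ 2) ^ 2) 1 * X ^ ζ := by
        rw [hsq, min_mul_of_nonneg _ _ (rpow_nonneg hX.le ζ), one_mul]
    _ ≤ (|h| / X ^ 2) ^ β * X ^ ζ := by
        gcongr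
        exact min_sq_one_le_rpow (by positivity) hβ
    _ = |h| ^ β * X ^ (ζ - 2 * β) := hrpow

/-- a kernel with a singularity of order `ζ ≤ 0` (together with its
partial derivatives `D^k K = ∂_t^{k₀} ∂_x^{k₁} K` up to parabolic order 4) has
second temporal differences bounded by `C' C |t-s|^β |x|^{ζ-2β}`. -/
theorem statement9 (ζ : ℝ) (hζ : ζ ≤ 0) :
    ∃ C' : ℝ, 0 < C' ∧
      ∀ (C : ℝ), 0 < C →
      ∀ (K : ℝ → ℝ → ℝ) (DK : ℕ → ℕ → ℝ → ℝ → ℝ),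
        (∀ t x : ℝ, DK 0 0 t x = K t x) →
        (∀ k₁ : ℕ, k₁ + 1 ≤ 4 → ∀ t x : ℝ, (t, x) ≠ (0, 0) →
          HasDerivAt (fun y => DK 0 k₁ t y) (DK 0 (k₁ + 1) t x) x) →
        (∀ k₀ k₁ : ℕ, 2 * (k₀ + 1) + k₁ ≤ 4 → ∀ t x : ℝ, (t, x) ≠ (0, 0) →
          HasDerivAt (fun s => DK k₀ k₁ s x) (DK (k₀ + 1) k₁ t x) t) →
        (∀ k₀ k₁ : ℕ, 2 * k₀ + k₁ ≤ 4 → ∀ t x : ℝ, (t, x) ≠ (0, 0) →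
          |DK k₀ k₁ t x| ≤ C * pNorm t x ^ (ζ - 2 * (k₀ : ℝ) - (k₁ : ℝ))) →
        ∀ β : ℝ, β ∈ Set.Icc (0 : ℝ) 2 → ∀ s t x : ℝ, x ≠ 0 →
          |K (t - s) x - 2 * K 0 x + K (s - t) x| ≤
            C' * C * |t - s| ^ β * |x| ^ (ζ - 2 * β) := by
  refine ⟨4, by norm_num, fun C hC K DK hK0 _ hDt hbound β hβ s t x hx => ?_⟩
  have hoff : ∀ u : ℝ, (u, x) ≠ (0, 0) := fun u hu => hx (congrArg Prod.snd hu)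
  have hfibre : ∀ k₀ k₁ : ℕ, 2 * k₀ + k₁ ≤ 4 → ∀ u,
      |DK k₀ k₁ u x| ≤ C * |x| ^ (ζ - 2 * (k₀ : ℝ) - k₁) := fun k₀ k₁ hk u =>
    (hbound k₀ k₁ hk u x (hoff u)).trans <| mul_le_mul_of_nonneg_left
      (rpow_pNorm_le_abs_rpow (by linarith [k₀.cast_nonneg (α := ℝ), k₁.cast_nonneg (α := ℝ)])
        u hx) hC.le
  have hf : ∀ u, HasDerivAt (fun v => K v x) (DK 1 0 u x) u := fun u => by
    simpa only [hK0] using hDt 0 0 (by norm_num) u x (hoff u)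
  have hf' : ∀ u, HasDerivAt (fun v => DK 1 0 v x) (DK 2 0 u x) u := fun u =>
    hDt 1 0 (by norm_num) u x (hoff u)
  have hsmall := norm_second_diff_le_of_hasDerivAt hf hf' (M := C * |x| ^ (ζ - 4))
    (fun u => by simpa [show ζ - 2 * 2 = ζ - 4 by ring] using hfibre 2 0 (by norm_num) u) (t - s)
  have hlarge := norm_second_diff_le_of_norm_le (f := fun v => K v x) (B := C * |x| ^ ζ)
    (fun u => by simpa [hK0] using hfibre 0 0 (by norm_num) u) (t - s)
  simp only [Real.norm_eq_abs, smul_eq_mul, neg_sub] at hsmall hlarge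
  have hsmall_nonneg : 0 ≤ C * |x| ^ (ζ - 4) * (t - s) ^ 2 :=
    mul_nonneg (mul_nonneg hC.le (rpow_nonneg (abs_nonneg x) _)) (sq_nonneg _)
  calc |K (t - s) x - 2 * K 0 x + K (s - t) x|
      ≤ min (4 * C * (|x| ^ (ζ - 4) * (t - s) ^ 2)) (4 * C * |x| ^ ζ) :=
        le_min (hsmall.trans (by linarith)) (hlarge.trans_eq (by ring))
    _ = 4 * C * min (|x| ^ (ζ - 4) * (t - s) ^ 2) (|x| ^ ζ) :=
        (mul_min_of_nonneg _ _ (by linarith)).symm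
    _ ≤ 4 * C * (|t - s| ^ β * |x| ^ (ζ - 2 * β)) := by
        gcongr
        exact min_rpow_le_rpow_mul_rpow (abs_pos.mpr hx) ζ (t - s) hβ
    _ = 4 * C * |t - s| ^ β * |x| ^ (ζ - 2 * β) := by ring
end
end

section
/- Let ζ ≤ 0 and C > 0. For each ε = 2^{−N} let K^ε : ε²ℤ × εℤ → ℝ satisfy |D̄_ε^k K^ε(z)| ≤ C ‖z‖_{s,ε}^{ζ − |k|_s} for all z ∈ ε²ℤ × εℤ and all k = (k₀,k₁) ∈ ℕ² with |k|_s := 2k₀ + k₁ ≤ 4. Then there is a constant C′, depending only on ζ and not on ε or K^ε, such that for every β ∈ [0,2], every s, t ∈ ε²ℤ and every x ∈ εℤ with x ≠ 0: |K^ε(t−s, x) − 2 K^ε(0, x) + K^ε(s−t, x)| ≤ C′ C |t−s|^β |x|^{ζ − 2β}. -/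
open Real

noncomputable section

/-- Forward time difference `D̄_{t,ε²}` on grid functions (indexed form:
`f m j` is the value at the point `(ε² m, ε j)`). -/
def fdT (ε : ℝ) (f : ℤ → ℤ → ℝ) : ℤ → ℤ → ℝ :=
  fun m j => (f (m + 1) j - f m j) / ε ^ 2

/-- Forward space difference `D̄_{x,ε}` on grid functions. -/
def fdX (ε : ℝ) (f : ℤ → ℤ → ℝ) : ℤ → ℤ → ℝ :=
  fun m j => (f m (j + 1) - f m j) / ε

/-- Iterated forward differences `D̄_ε^k = D̄_{t,ε²}^{k₀} D̄_{x,ε}^{k₁}`. -/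
def fdiff (ε : ℝ) (k₀ k₁ : ℕ) (f : ℤ → ℤ → ℝ) : ℤ → ℤ → ℝ :=
  (fdT ε)^[k₀] ((fdX ε)^[k₁] f)

/-- Parabolic norm `‖z‖_s` of the grid point `z = (ε² m, ε j)`. -/
def snorm (ε : ℝ) (m j : ℤ) : ℝ :=
  max (Real.sqrt |ε ^ 2 * (m : ℝ)|) |ε * (j : ℝ)|

/-- `‖z‖_{s,ε} = ‖z‖_s ∨ ε` for the grid point `z = (ε² m, ε j)`. -/
def snormE (ε : ℝ) (m j : ℤ) : ℝ := max (snorm ε m j) ε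

/-- The grid function `K` is supported in the parabolic ball of radius `R`
around the origin. -/
def SuppIn (ε R : ℝ) (K : ℤ → ℤ → ℝ) : Prop :=
  ∀ m j : ℤ, R < snorm ε m j → K m j = 0

/-- `⦀K⦀_{ζ;m}^{(ε)} ≤ M`, expressed through the defining bounds. -/
def SingBound (ε ζ : ℝ) (m : ℕ) (M : ℝ) (K : ℤ → ℤ → ℝ) : Prop :=
  ∀ k₀ k₁ : ℕ, 2 * k₀ + k₁ ≤ m → ∀ mz j : ℤ,
    |fdiff ε k₀ k₁ K mz j| ≤ M * snormE ε mz j ^ (ζ - (2 * (k₀ : ℝ) + (k₁ : ℝ)))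

lemma tele (g : ℤ → ℝ) (c : ℤ) (m : ℕ) :
    ∑ b ∈ Finset.range m, (g (c + b + 1) - g (c + b)) = g (c + m) - g c := by
  have h := Finset.sum_range_sub (f := fun b : ℕ => g (c + b)) m
  simp only [Nat.cast_zero, add_zero] at h
  rw [← h]
  refine Finset.sum_congr rfl fun b _ => ?_
  congr 1
  push_cast
  ring_nf

lemma secdiff (K : ℤ → ℝ) (m : ℕ) :
    K (m:ℤ) - 2 * K 0 + K (-(m:ℤ)) =
      ∑ a ∈ Finset.range m, ∑ b ∈ Finset.range m,
        (K ((a:ℤ) + (b:ℤ) - (m:ℤ) + 2) - 2 * K ((a:ℤ) + (b:ℤ) - (m:ℤ) + 1)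
          + K ((a:ℤ) + (b:ℤ) - (m:ℤ))) := by
  set d : ℤ → ℝ := fun n => K (n + 1) - K n with hd
  have inner : ∀ a : ℕ, ∑ b ∈ Finset.range m,
      (K ((a:ℤ) + (b:ℤ) - (m:ℤ) + 2) - 2 * K ((a:ℤ) + (b:ℤ) - (m:ℤ) + 1)
        + K ((a:ℤ) + (b:ℤ) - (m:ℤ)))
      = d (a:ℤ) - d ((a:ℤ) - m) := by
    intro a
    have h := tele d ((a:ℤ) - m) m
    rw [show (a:ℤ) - m + m = a by ring] at h
    rw [← h]
    refine Finset.sum_congr rfl fun b _ => ?_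
    have h1 : (a:ℤ) + b - m + 2 = ((a:ℤ) - m) + b + 1 + 1 := by ring
    have h2 : (a:ℤ) + b - m + 1 = ((a:ℤ) - m) + b + 1 := by ring
    rw [h1, h2, show (a:ℤ) + b - m = ((a:ℤ) - m) + b by ring]
    simp only [hd]
    ring
  rw [Finset.sum_congr rfl fun a _ => inner a, Finset.sum_sub_distrib]
  have s1 : ∑ a ∈ Finset.range m, d (a:ℤ) = K m - K 0 := by
    have h := tele K 0 m
    simp only [zero_add] at h
    rw [← h]
  have s2 : ∑ a ∈ Finset.range m, d ((a:ℤ) - m) = K 0 - K (-(m:ℤ)) := by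
    have h := tele K (-(m:ℤ)) m
    rw [show -(m:ℤ) + m = 0 by ring] at h
    rw [← h]
    refine Finset.sum_congr rfl fun a _ => ?_
    simp only [hd]
    rw [show -(m:ℤ) + a + 1 = (a:ℤ) - m + 1 by ring, show -(m:ℤ) + a = (a:ℤ) - m by ring]
  rw [s1, s2]
  ring

lemma fdiff2_eq (ε : ℝ) (hε : ε ≠ 0) (K : ℤ → ℤ → ℝ) (m j : ℤ) :
    fdiff ε 2 0 K m j = (K (m+2) j - 2 * K (m+1) j + K m j) / ε^4 := by
  show fdT ε (fdT ε ((fdX ε)^[0] K)) m j = _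
  simp only [Function.iterate_zero, id_eq, fdT]
  field_simp
  ring_nf

/-- discrete second temporal differences of a discrete singular
kernel of order `ζ ≤ 0`. -/
theorem statement10 (ζ : ℝ) (hζ : ζ ≤ 0) :
    ∃ C' : ℝ, 0 < C' ∧
      ∀ (N : ℕ) (ε : ℝ), ε = ((2 : ℝ) ^ N)⁻¹ →
      ∀ (C : ℝ), 0 < C →
      ∀ K : ℤ → ℤ → ℝ,
        (∀ k₀ k₁ : ℕ, 2 * k₀ + k₁ ≤ 4 → ∀ m j : ℤ,
          |fdiff ε k₀ k₁ K m j| ≤ C * snormE ε m j ^ (ζ - (2 * (k₀ : ℝ) + (k₁ : ℝ)))) →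
        ∀ β : ℝ, β ∈ Set.Icc (0 : ℝ) 2 → ∀ ms mt j : ℤ, j ≠ 0 →
          |K (mt - ms) j - 2 * K 0 j + K (ms - mt) j| ≤
            C' * C * |ε ^ 2 * ((mt : ℝ) - (ms : ℝ))| ^ β * |ε * (j : ℝ)| ^ (ζ - 2 * β) := by
  refine ⟨4, by norm_num, ?_⟩
  rintro N ε hε C hC K hK β ⟨hβ0, hβ2⟩ ms mt j hj
  have hε0 : 0 < ε := by rw [hε]; positivity
  have hjR : ((j:ℝ)) ≠ 0 := Int.cast_ne_zero.mpr hj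
  set X : ℝ := |ε * (j:ℝ)| with hXdef
  have hX0 : 0 < X := abs_pos.mpr (mul_ne_zero hε0.ne' hjR)
  set m : ℕ := (mt - ms).natAbs with hm
  set T : ℝ := ε^2 * (m:ℝ) with hT
  have hT0 : 0 ≤ T := by positivity
  have hTm : |ε ^ 2 * ((mt:ℝ) - (ms:ℝ))| = T := by
    rw [abs_mul, abs_of_nonneg (by positivity : (0:ℝ) ≤ ε^2)]
    congr 1
    rw [show (mt:ℝ) - (ms:ℝ) = ((mt - ms : ℤ) : ℝ) by push_cast; ring,
      hm, Nat.cast_natAbs, Int.cast_abs]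
  have hsd : K (mt - ms) j - 2 * K 0 j + K (ms - mt) j
      = K (m:ℤ) j - 2 * K 0 j + K (-(m:ℤ)) j := by
    rcases Int.natAbs_eq (mt - ms) with h | h
    · rw [show mt - ms = (m:ℤ) by omega, show ms - mt = -(m:ℤ) by omega]
    · rw [show mt - ms = -(m:ℤ) by omega, show ms - mt = (m:ℤ) by omega]
      ring
  rw [hsd, hTm]
  have hXle : ∀ mz : ℤ, X ≤ snormE ε mz j :=
    fun mz => le_trans (le_max_right _ _) (le_max_left _ _)
  have hpow : ∀ e : ℝ, e ≤ 0 → ∀ mz : ℤ, snormE ε mz j ^ e ≤ X ^ e :=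
    fun e he mz => Real.rpow_le_rpow_of_nonpos hX0 (hXle mz) he
  have hK0 : ∀ mz : ℤ, |K mz j| ≤ C * X ^ ζ := by
    intro mz
    have h := hK 0 0 (by norm_num) mz j
    norm_num [fdiff] at h
    exact h.trans (mul_le_mul_of_nonneg_left (hpow ζ hζ mz) hC.le)
  have hK2 : ∀ mz : ℤ, |K (mz+2) j - 2 * K (mz+1) j + K mz j|
      ≤ ε^4 * (C * X ^ (ζ - 4)) := by
    intro mz
    have h := hK 2 0 (by norm_num) mz j
    rw [fdiff2_eq ε hε0.ne' K mz j] at h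
    norm_num at h
    rw [abs_div, abs_of_pos (by positivity : (0:ℝ) < ε^4),
      div_le_iff₀ (by positivity : (0:ℝ) < ε^4)] at h
    refine h.trans ?_
    rw [mul_comm]
    have := mul_le_mul_of_nonneg_left (hpow (ζ - 4) (by linarith) mz) hC.le
    exact mul_le_mul_of_nonneg_left this (by positivity)
  rcases le_total (X^2) T with hcase | hcase
  · -- X^2 ≤ T : use size bound on each term
    have b1 := abs_le.mp (hK0 (m:ℤ))
    have b2 := abs_le.mp (hK0 0)
    have b3 := abs_le.mp (hK0 (-(m:ℤ)))
    have h1 : |K (m:ℤ) j - 2 * K 0 j + K (-(m:ℤ)) j| ≤ 4 * (C * X ^ ζ) :=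
      abs_le.mpr ⟨by linarith [b1.1, b2.2, b3.1], by linarith [b1.2, b2.1, b3.2]⟩
    refine h1.trans ?_
    have hXz : X ^ ζ = (X^2) ^ β * X ^ (ζ - 2*β) := by
      rw [← Real.rpow_natCast X 2, ← Real.rpow_mul hX0.le, ← Real.rpow_add hX0]
      norm_num
    rw [hXz]
    have hb : (X^2) ^ β ≤ T ^ β := Real.rpow_le_rpow (by positivity) hcase hβ0
    calc 4 * (C * ((X^2) ^ β * X ^ (ζ - 2*β)))
        = 4 * C * (X^2) ^ β * X ^ (ζ - 2*β) := by ring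
      _ ≤ 4 * C * T ^ β * X ^ (ζ - 2*β) := by
          refine mul_le_mul_of_nonneg_right ?_ (Real.rpow_nonneg hX0.le _)
          exact mul_le_mul_of_nonneg_left hb (by positivity)
  · -- T ≤ X^2 : use the second time difference
    rcases Nat.eq_zero_or_pos m with hm0 | hm0
    · have hL : K ((m:ℕ):ℤ) j - 2 * K 0 j + K (-(m:ℤ)) j = 0 := by
        rw [hm0]; norm_num; ring
      rw [hL, abs_zero]
      positivity
    · have hTpos : 0 < T := by
        have : (0:ℝ) < (m:ℝ) := by exact_mod_cast hm0
        rw [hT]; positivity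
      have h2 : |K (m:ℤ) j - 2 * K 0 j + K (-(m:ℤ)) j| ≤ C * (T^2 * X ^ (ζ - 4)) := by
        rw [secdiff (fun i => K i j) m]
        refine (Finset.abs_sum_le_sum_abs _ _).trans ?_
        have hin : ∀ a ∈ Finset.range m,
            |∑ b ∈ Finset.range m,
              (K ((a:ℤ) + (b:ℤ) - (m:ℤ) + 2) j - 2 * K ((a:ℤ) + (b:ℤ) - (m:ℤ) + 1) j
                + K ((a:ℤ) + (b:ℤ) - (m:ℤ)) j)|
            ≤ (m:ℝ) * (ε^4 * (C * X ^ (ζ - 4))) := by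
          intro a _
          refine (Finset.abs_sum_le_sum_abs _ _).trans ?_
          have := Finset.sum_le_card_nsmul (Finset.range m) _ (ε^4 * (C * X ^ (ζ - 4)))
            (fun b _ => hK2 ((a:ℤ) + (b:ℤ) - (m:ℤ)))
          simpa [Finset.card_range, nsmul_eq_mul] using this
        refine (Finset.sum_le_sum hin).trans ?_
        rw [Finset.sum_const, Finset.card_range, nsmul_eq_mul, hT]
        ring_nf
        exact le_rfl
      refine h2.trans ?_
      have hTz : T^2 = T ^ β * T ^ (2 - β) := by
        rw [← Real.rpow_natCast T 2, ← Real.rpow_add hTpos]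
        norm_num
      have hb : T ^ (2 - β) ≤ (X^2) ^ (2 - β) :=
        Real.rpow_le_rpow hT0 hcase (by linarith)
      have hXe : (X^2) ^ (2 - β) * X ^ (ζ - 4) = X ^ (ζ - 2*β) := by
        rw [← Real.rpow_natCast X 2, ← Real.rpow_mul hX0.le, ← Real.rpow_add hX0]
        norm_num
        ring_nf
      calc C * (T^2 * X ^ (ζ - 4))
          = C * (T ^ β * (T ^ (2 - β) * X ^ (ζ - 4))) := by rw [hTz]; ring
        _ ≤ C * (T ^ β * ((X^2) ^ (2 - β) * X ^ (ζ - 4))) := by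
            refine mul_le_mul_of_nonneg_left ?_ hC.le
            refine mul_le_mul_of_nonneg_left ?_ (Real.rpow_nonneg hT0 _)
            exact mul_le_mul_of_nonneg_right hb (Real.rpow_nonneg hX0.le _)
        _ = C * (T ^ β * X ^ (ζ - 2*β)) := by rw [hXe]
        _ ≤ 4 * C * T ^ β * X ^ (ζ - 2*β) := by
            have h0 : 0 ≤ C * (T ^ β * X ^ (ζ - 2*β)) := by positivity
            nlinarith [Real.rpow_nonneg hT0 β, Real.rpow_nonneg hX0.le (ζ - 2*β), hC.le]
end
end

section
/- Let c : ℤ×ℤ → ℝ be finitely supported with c(k,l) = c(l,k), let ζ₁, ζ₂ ∈ ℝ, m ∈ ℕ and R > 0. Then there is a constant C, depending only on m, c, ζ₁, ζ₂ and R (and not on ε), such that for all ε = 2^{−N} and all K₁, K₂ : ε²ℤ × εℤ → ℝ supported in the ball of radius R around the origin: ⦀B_ε(K₁,K₂)⦀_{ζ₁+ζ₂; m}^{(ε)} ≤ C ⦀K₁⦀_{ζ₁; m}^{(ε)} ⦀K₂⦀_{ζ₂; m}^{(ε)}, where B_ε(K₁,K₂)(t,x) := Σ_{k,l} c(k,l)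 K₁(t, x+εk) K₂(t, x+εl). -/
open Real

noncomputable section

/-- The twisted discrete product `B_ε(K₁,K₂)(t,x) = Σ_{k,l} c(k,l) K₁(t,x+εk) K₂(t,x+εl)`
written on the grid indices. -/
def Bprod (c : (ℤ × ℤ) →₀ ℝ) (K₁ K₂ : ℤ → ℤ → ℝ) : ℤ → ℤ → ℝ :=
  fun m j => ∑ p ∈ c.support, c p * K₁ m (j + p.1) * K₂ m (j + p.2)

/-! ### parabolic norm basics -/

def gf (mz j : ℤ) : ℝ := max (max (Real.sqrt |(mz : ℝ)|) |(j : ℝ)|) 1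

lemma gf_one_le (mz j : ℤ) : 1 ≤ gf mz j := le_max_right _ _

lemma gf_pos (mz j : ℤ) : 0 < gf mz j := lt_of_lt_of_le one_pos (gf_one_le mz j)

lemma snormE_eq {ε : ℝ} (hε : 0 < ε) (mz j : ℤ) : snormE ε mz j = ε * gf mz j := by
  have h1 : Real.sqrt |ε ^ 2 * (mz : ℝ)| = ε * Real.sqrt |(mz : ℝ)| := by
    rw [abs_mul, abs_pow, abs_of_pos hε, Real.sqrt_mul (by positivity), Real.sqrt_sq hε.le]
  have h2 : |ε * (j : ℝ)| = ε * |(j : ℝ)| := by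
    rw [abs_mul, abs_of_pos hε]
  unfold snormE snorm gf
  rw [h1, h2, mul_max_of_nonneg _ _ hε.le, mul_max_of_nonneg _ _ hε.le, mul_one]

lemma snormE_pos {ε : ℝ} (hε : 0 < ε) (mz j : ℤ) : 0 < snormE ε mz j := by
  rw [snormE_eq hε]; exact mul_pos hε (gf_pos mz j)

lemma sqrt_add_le {a b : ℝ} (ha : 0 ≤ a) (hb : 0 ≤ b) :
    Real.sqrt (a + b) ≤ Real.sqrt a + Real.sqrt b := by
  rw [show Real.sqrt a + Real.sqrt b = Real.sqrt ((Real.sqrt a + Real.sqrt b) ^ 2) by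
    rw [Real.sqrt_sq (by positivity)]]
  apply Real.sqrt_le_sqrt
  nlinarith [Real.sq_sqrt ha, Real.sq_sqrt hb, Real.sqrt_nonneg a, Real.sqrt_nonneg b]

lemma sqrt_le_one_add {x : ℝ} (hx : 0 ≤ x) : Real.sqrt x ≤ 1 + x := by
  nlinarith [Real.sq_sqrt hx, Real.sqrt_nonneg x]

lemma gf_shift_le (mz j s t : ℤ) :
    gf (mz + s) (j + t) ≤ (2 + |(s : ℝ)| + |(t : ℝ)|) * gf mz j := by
  have hg1 : (1 : ℝ) ≤ gf mz j := gf_one_le mz j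
  have hgs : Real.sqrt |(mz : ℝ)| ≤ gf mz j := le_trans (le_max_left _ _) (le_max_left _ _)
  have hgj : |(j : ℝ)| ≤ gf mz j := le_trans (le_max_right _ _) (le_max_left _ _)
  have hκ : (0 : ℝ) ≤ |(s : ℝ)| + |(t : ℝ)| := by positivity
  unfold gf
  push_cast
  apply max_le
  apply max_le
  · calc Real.sqrt |((mz : ℝ) + (s : ℝ))| ≤ Real.sqrt (|(mz : ℝ)| + |(s : ℝ)|) := by
          exact Real.sqrt_le_sqrt (abs_add_le _ _)
      _ ≤ Real.sqrt |(mz : ℝ)| + Real.sqrt |(s : ℝ)| := sqrt_add_le (abs_nonneg _) (abs_nonneg _)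
      _ ≤ gf mz j + (1 + |(s : ℝ)|) := by
          gcongr
          exact sqrt_le_one_add (abs_nonneg _)
      _ ≤ gf mz j + (1 + |(s : ℝ)|) * gf mz j := by nlinarith [abs_nonneg ((s : ℝ))]
      _ ≤ (2 + |(s : ℝ)| + |(t : ℝ)|) * gf mz j := by nlinarith [abs_nonneg (t : ℝ)]
  · calc |((j : ℝ) + (t : ℝ))| ≤ |(j : ℝ)| + |(t : ℝ)| := abs_add_le _ _
      _ ≤ gf mz j + |(t : ℝ)| * gf mz j := by nlinarith [abs_nonneg (t : ℝ)]
      _ ≤ (2 + |(s : ℝ)| + |(t : ℝ)|) * gf mz j := by nlinarith [abs_nonneg (s : ℝ)]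
  · calc (1 : ℝ) ≤ gf mz j := hg1
      _ ≤ (2 + |(s : ℝ)| + |(t : ℝ)|) * gf mz j := by nlinarith

lemma snormE_shift_le {ε : ℝ} (hε : 0 < ε) (mz j s t : ℤ) :
    snormE ε (mz + s) (j + t) ≤ (2 + |(s : ℝ)| + |(t : ℝ)|) * snormE ε mz j := by
  rw [snormE_eq hε, snormE_eq hε]
  have := gf_shift_le mz j s t
  calc ε * gf (mz + s) (j + t) ≤ ε * ((2 + |(s : ℝ)| + |(t : ℝ)|) * gf mz j) := by
        exact mul_le_mul_of_nonneg_left this hε.le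
    _ = (2 + |(s : ℝ)| + |(t : ℝ)|) * (ε * gf mz j) := by ring

lemma snormE_le_shift {ε : ℝ} (hε : 0 < ε) (mz j s t : ℤ) :
    snormE ε mz j ≤ (2 + |(s : ℝ)| + |(t : ℝ)|) * snormE ε (mz + s) (j + t) := by
  have := snormE_shift_le hε (mz + s) (j + t) (-s) (-t)
  simp only [add_neg_cancel_right] at this
  simpa using this

/-- key comparison of rpow of comparable bases -/
lemma rpow_compare {x y κ q B : ℝ} (hx : 0 < x) (hy : 0 < y) (hκ : 1 ≤ κ)
    (h1 : x ≤ κ * y) (h2 : y ≤ κ * x) (hq : |q| ≤ B) : x ^ q ≤ κ ^ B * y ^ q := by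
  have hκ0 : (0 : ℝ) < κ := lt_of_lt_of_le one_pos hκ
  rcases le_or_gt 0 q with hq0 | hq0
  · calc x ^ q ≤ (κ * y) ^ q := Real.rpow_le_rpow hx.le h1 hq0
      _ = κ ^ q * y ^ q := Real.mul_rpow hκ0.le hy.le
      _ ≤ κ ^ B * y ^ q := by
          have : κ ^ q ≤ κ ^ B :=
            Real.rpow_le_rpow_of_exponent_le hκ (le_trans (le_abs_self q) hq)
          exact mul_le_mul_of_nonneg_right this (Real.rpow_nonneg hy.le q)
  · have hyx : y / κ ≤ x := by
      rw [div_le_iff₀ hκ0]; linarith [mul_le_mul_of_nonneg_left h2 (le_of_lt hκ0)]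
    have hyx' : (0 : ℝ) < y / κ := div_pos hy hκ0
    calc x ^ q ≤ (y / κ) ^ q := Real.rpow_le_rpow_of_nonpos hyx' hyx hq0.le
      _ = y ^ q / κ ^ q := Real.div_rpow hy.le hκ0.le q
      _ = κ ^ (-q) * y ^ q := by
          rw [Real.rpow_neg hκ0.le]; field_simp
      _ ≤ κ ^ B * y ^ q := by
          have : κ ^ (-q) ≤ κ ^ B :=
            Real.rpow_le_rpow_of_exponent_le hκ (le_trans (neg_le_abs q) hq)
          exact mul_le_mul_of_nonneg_right this (Real.rpow_nonneg hy.le q)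

lemma snormE_shift_rpow_le {ε : ℝ} (hε : 0 < ε) (mz j s t : ℤ) {q B : ℝ} (hq : |q| ≤ B) :
    snormE ε (mz + s) (j + t) ^ q ≤
      (2 + |(s : ℝ)| + |(t : ℝ)|) ^ B * snormE ε mz j ^ q := by
  refine rpow_compare (snormE_pos hε _ _) (snormE_pos hε _ _) ?_
    (snormE_shift_le hε mz j s t) (snormE_le_shift hε mz j s t) hq
  have := abs_nonneg ((s : ℝ)); have := abs_nonneg ((t : ℝ)); linarith

/-! ### operator algebra -/

def sh (s t : ℤ) (K : ℤ → ℤ → ℝ) : ℤ → ℤ → ℝ := fun a b => K (a + s) (b + t)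

lemma fdT_sh (ε : ℝ) (s t : ℤ) (K : ℤ → ℤ → ℝ) :
    fdT ε (sh s t K) = sh s t (fdT ε K) := by
  funext a b
  simp only [fdT, sh]
  congr 3
  omega

lemma fdX_sh (ε : ℝ) (s t : ℤ) (K : ℤ → ℤ → ℝ) :
    fdX ε (sh s t K) = sh s t (fdX ε K) := by
  funext a b
  simp only [fdX, sh]
  congr 3
  omega

lemma fdT_iter_sh (ε : ℝ) (n : ℕ) (s t : ℤ) (K : ℤ → ℤ → ℝ) :
    (fdT ε)^[n] (sh s t K) = sh s t ((fdT ε)^[n] K) := by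
  induction n generalizing K with
  | zero => rfl
  | succ n ih => rw [Function.iterate_succ_apply, fdT_sh, ih, Function.iterate_succ_apply]

lemma fdX_iter_sh (ε : ℝ) (n : ℕ) (s t : ℤ) (K : ℤ → ℤ → ℝ) :
    (fdX ε)^[n] (sh s t K) = sh s t ((fdX ε)^[n] K) := by
  induction n generalizing K with
  | zero => rfl
  | succ n ih => rw [Function.iterate_succ_apply, fdX_sh, ih, Function.iterate_succ_apply]

lemma fdiff_sh (ε : ℝ) (k₀ k₁ : ℕ) (s t : ℤ) (K : ℤ → ℤ → ℝ) :
    fdiff ε k₀ k₁ (sh s t K) = sh s t (fdiff ε k₀ k₁ K) := by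
  unfold fdiff
  rw [fdX_iter_sh, fdT_iter_sh]

lemma fdT_fdX_comm (ε : ℝ) (K : ℤ → ℤ → ℝ) : fdX ε (fdT ε K) = fdT ε (fdX ε K) := by
  funext a b
  simp only [fdX, fdT]
  ring

lemma fdX_iter_fdT (ε : ℝ) (n : ℕ) (K : ℤ → ℤ → ℝ) :
    (fdX ε)^[n] (fdT ε K) = fdT ε ((fdX ε)^[n] K) := by
  induction n generalizing K with
  | zero => rfl
  | succ n ih => rw [Function.iterate_succ_apply, fdT_fdX_comm, ih,
      Function.iterate_succ_apply]

lemma fdiff_succ_x (ε : ℝ) (k₀ k₁ : ℕ) (K : ℤ → ℤ → ℝ) :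
    fdiff ε k₀ (k₁ + 1) K = fdiff ε k₀ k₁ (fdX ε K) := by
  unfold fdiff
  rw [Function.iterate_succ_apply]

lemma fdiff_succ_t (ε : ℝ) (k₀ k₁ : ℕ) (K : ℤ → ℤ → ℝ) :
    fdiff ε (k₀ + 1) k₁ K = fdiff ε k₀ k₁ (fdT ε K) := by
  unfold fdiff
  rw [fdX_iter_fdT, Function.iterate_succ_apply]

lemma fdT_add (ε : ℝ) (f g : ℤ → ℤ → ℝ) :
    fdT ε (fun a b => f a b + g a b) = fun a b => fdT ε f a b + fdT ε g a b := by
  funext a b; simp only [fdT]; ring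

lemma fdX_add (ε : ℝ) (f g : ℤ → ℤ → ℝ) :
    fdX ε (fun a b => f a b + g a b) = fun a b => fdX ε f a b + fdX ε g a b := by
  funext a b; simp only [fdX]; ring

lemma fdT_iter_add (ε : ℝ) (n : ℕ) (f g : ℤ → ℤ → ℝ) :
    (fdT ε)^[n] (fun a b => f a b + g a b)
      = fun a b => (fdT ε)^[n] f a b + (fdT ε)^[n] g a b := by
  induction n generalizing f g with
  | zero => rfl
  | succ n ih => rw [Function.iterate_succ_apply, fdT_add, ih,
      Function.iterate_succ_apply, Function.iterate_succ_apply]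

lemma fdX_iter_add (ε : ℝ) (n : ℕ) (f g : ℤ → ℤ → ℝ) :
    (fdX ε)^[n] (fun a b => f a b + g a b)
      = fun a b => (fdX ε)^[n] f a b + (fdX ε)^[n] g a b := by
  induction n generalizing f g with
  | zero => rfl
  | succ n ih => rw [Function.iterate_succ_apply, fdX_add, ih,
      Function.iterate_succ_apply, Function.iterate_succ_apply]

lemma fdiff_add (ε : ℝ) (k₀ k₁ : ℕ) (f g : ℤ → ℤ → ℝ) :
    fdiff ε k₀ k₁ (fun a b => f a b + g a b)
      = fun a b => fdiff ε k₀ k₁ f a b + fdiff ε k₀ k₁ g a b := by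
  unfold fdiff
  rw [fdX_iter_add, fdT_iter_add]

lemma fdT_smul (ε r : ℝ) (f : ℤ → ℤ → ℝ) :
    fdT ε (fun a b => r * f a b) = fun a b => r * fdT ε f a b := by
  funext a b; simp only [fdT]; ring

lemma fdX_smul (ε r : ℝ) (f : ℤ → ℤ → ℝ) :
    fdX ε (fun a b => r * f a b) = fun a b => r * fdX ε f a b := by
  funext a b; simp only [fdX]; ring

lemma fdiff_smul (ε r : ℝ) (k₀ k₁ : ℕ) (f : ℤ → ℤ → ℝ) :
    fdiff ε k₀ k₁ (fun a b => r * f a b) = fun a b => r * fdiff ε k₀ k₁ f a b := by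
  unfold fdiff
  have hX : ∀ n (g : ℤ → ℤ → ℝ), (fdX ε)^[n] (fun a b => r * g a b)
      = fun a b => r * (fdX ε)^[n] g a b := by
    intro n
    induction n with
    | zero => intro g; rfl
    | succ n ih => intro g
                   rw [Function.iterate_succ_apply, fdX_smul, ih,
                     Function.iterate_succ_apply]
  have hT : ∀ n (g : ℤ → ℤ → ℝ), (fdT ε)^[n] (fun a b => r * g a b)
      = fun a b => r * (fdT ε)^[n] g a b := by
    intro n
    induction n with
    | zero => intro g; rfl
    | succ n ih => intro g
                   rw [Function.iterate_succ_apply, fdT_smul, ih,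
                     Function.iterate_succ_apply]
  rw [hX, hT]

/-- one-step Leibniz rule in space -/
lemma fdX_mul (ε : ℝ) (hε : ε ≠ 0) (f g : ℤ → ℤ → ℝ) :
    fdX ε (fun a b => f a b * g a b)
      = fun a b => fdX ε f a b * sh 0 1 g a b + f a b * fdX ε g a b := by
  funext a b
  simp only [fdX, sh, add_zero]
  field_simp
  ring

/-- one-step Leibniz rule in time -/
lemma fdT_mul (ε : ℝ) (hε : ε ≠ 0) (f g : ℤ → ℤ → ℝ) :
    fdT ε (fun a b => f a b * g a b)
      = fun a b => fdT ε f a b * sh 1 0 g a b + f a b * fdT ε g a b := by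
  funext a b
  simp only [fdT, sh, add_zero]
  have : ε ^ 2 ≠ 0 := pow_ne_zero 2 hε
  field_simp
  ring

/-! ### SingBound lemmas -/

lemma SingBound_nonneg {ε ζ M : ℝ} {m : ℕ} {K : ℤ → ℤ → ℝ} (hε : 0 < ε)
    (h : SingBound ε ζ m M K) : 0 ≤ M := by
  have h0 := h 0 0 (by omega) 0 0
  have hpos : (0 : ℝ) < snormE ε 0 0 ^ (ζ - (2 * ((0 : ℕ) : ℝ) + ((0 : ℕ) : ℝ))) :=
    Real.rpow_pos_of_pos (snormE_pos hε 0 0) _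
  by_contra h'
  push_neg at h'
  have := mul_neg_of_neg_of_pos h' hpos
  have := abs_nonneg (fdiff ε 0 0 K 0 0)
  linarith

lemma SingBound_mono_m {ε ζ M : ℝ} {m m' : ℕ} {K : ℤ → ℤ → ℝ}
    (hm : m' ≤ m) (h : SingBound ε ζ m M K) : SingBound ε ζ m' M K :=
  fun k₀ k₁ hk => h k₀ k₁ (le_trans hk hm)

lemma SingBound_mono_M {ε ζ M M' : ℝ} {m : ℕ} {K : ℤ → ℤ → ℝ} (hε : 0 < ε)
    (hM : M ≤ M') (h : SingBound ε ζ m M K) : SingBound ε ζ m M' K := by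
  intro k₀ k₁ hk mz j
  refine le_trans (h k₀ k₁ hk mz j) ?_
  exact mul_le_mul_of_nonneg_right hM (Real.rpow_nonneg (snormE_pos hε mz j).le _)

lemma SingBound_sh {ε ζ M B : ℝ} {m : ℕ} {K : ℤ → ℤ → ℝ} (hε : 0 < ε)
    (hB : |ζ| + m ≤ B) (h : SingBound ε ζ m M K) (s t : ℤ) :
    SingBound ε ζ m ((2 + |(s : ℝ)| + |(t : ℝ)|) ^ B * M) (sh s t K) := by
  have hM : 0 ≤ M := SingBound_nonneg hε h
  intro k₀ k₁ hk mz j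
  rw [fdiff_sh]
  have h1 : |fdiff ε k₀ k₁ K (mz + s) (j + t)| ≤
      M * snormE ε (mz + s) (j + t) ^ (ζ - (2 * (k₀ : ℝ) + (k₁ : ℝ))) :=
    h k₀ k₁ hk (mz + s) (j + t)
  have hq : |ζ - (2 * (k₀ : ℝ) + (k₁ : ℝ))| ≤ B := by
    have h2 : |ζ - (2 * (k₀ : ℝ) + (k₁ : ℝ))| ≤ |ζ| + (2 * (k₀ : ℝ) + (k₁ : ℝ)) := by
      have := abs_sub ζ (2 * (k₀ : ℝ) + (k₁ : ℝ))
      have h3 : |2 * (k₀ : ℝ) + (k₁ : ℝ)| = 2 * (k₀ : ℝ) + (k₁ : ℝ) :=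
        abs_of_nonneg (by positivity)
      calc |ζ - (2 * (k₀ : ℝ) + (k₁ : ℝ))| ≤ |ζ| + |2 * (k₀ : ℝ) + (k₁ : ℝ)| := abs_sub _ _
        _ = |ζ| + (2 * (k₀ : ℝ) + (k₁ : ℝ)) := by rw [h3]
    have h4 : 2 * (k₀ : ℝ) + (k₁ : ℝ) ≤ (m : ℝ) := by
      have : ((2 * k₀ + k₁ : ℕ) : ℝ) ≤ (m : ℝ) := Nat.cast_le.mpr hk
      push_cast at this
      linarith
    linarith
  have h2 := snormE_shift_rpow_le hε mz j s t hq
  calc |fdiff ε k₀ k₁ K (mz + s) (j + t)|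
      ≤ M * snormE ε (mz + s) (j + t) ^ (ζ - (2 * (k₀ : ℝ) + (k₁ : ℝ))) := h1
    _ ≤ M * ((2 + |(s : ℝ)| + |(t : ℝ)|) ^ B *
        snormE ε mz j ^ (ζ - (2 * (k₀ : ℝ) + (k₁ : ℝ)))) :=
        mul_le_mul_of_nonneg_left h2 hM
    _ = (2 + |(s : ℝ)| + |(t : ℝ)|) ^ B * M *
        snormE ε mz j ^ (ζ - (2 * (k₀ : ℝ) + (k₁ : ℝ))) := by ring

lemma SingBound_fdX {ε ζ M : ℝ} {m m' : ℕ} {K : ℤ → ℤ → ℝ}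
    (hm : m' + 1 ≤ m) (h : SingBound ε ζ m M K) :
    SingBound ε (ζ - 1) m' M (fdX ε K) := by
  intro k₀ k₁ hk mz j
  have e : ζ - 1 - (2 * (k₀ : ℝ) + (k₁ : ℝ)) = ζ - (2 * (k₀ : ℝ) + ((k₁ + 1 : ℕ) : ℝ)) := by
    push_cast; ring
  rw [e, ← fdiff_succ_x]
  exact h k₀ (k₁ + 1) (by omega) mz j

lemma SingBound_fdT {ε ζ M : ℝ} {m m' : ℕ} {K : ℤ → ℤ → ℝ}
    (hm : m' + 2 ≤ m) (h : SingBound ε ζ m M K) :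
    SingBound ε (ζ - 2) m' M (fdT ε K) := by
  intro k₀ k₁ hk mz j
  have e : ζ - 2 - (2 * (k₀ : ℝ) + (k₁ : ℝ)) = ζ - (2 * ((k₀ + 1 : ℕ) : ℝ) + (k₁ : ℝ)) := by
    push_cast; ring
  rw [e, ← fdiff_succ_t]
  exact h (k₀ + 1) k₁ (by omega) mz j

/-! ### the product bound -/

set_option maxHeartbeats 1000000 in
lemma mul_bound (ε B : ℝ) (hε : 0 < ε) :
    ∀ m : ℕ, ∀ ζ₁ ζ₂ M₁ M₂ : ℝ, |ζ₁| + m ≤ B → |ζ₂| + m ≤ B →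
    ∀ f g : ℤ → ℤ → ℝ, SingBound ε ζ₁ m M₁ f → SingBound ε ζ₂ m M₂ g →
    SingBound ε (ζ₁ + ζ₂) m ((2 * 3 ^ B) ^ m * M₁ * M₂) (fun a b => f a b * g a b) := by
  intro m
  induction m using Nat.strong_induction_on with
  | _ m IH =>
  intro ζ₁ ζ₂ M₁ M₂ hB₁ hB₂ f g hf hg
  have hM₁ : 0 ≤ M₁ := SingBound_nonneg hε hf
  have hM₂ : 0 ≤ M₂ := SingBound_nonneg hε hg
  have hB0 : 0 ≤ B := le_trans (by positivity) hB₁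
  have h3B : (1 : ℝ) ≤ 3 ^ B := by
    calc (1 : ℝ) = 3 ^ (0 : ℝ) := (Real.rpow_zero 3).symm
      _ ≤ 3 ^ B := Real.rpow_le_rpow_of_exponent_le (by norm_num) hB0
  have hbase : (1 : ℝ) ≤ 2 * 3 ^ B := by linarith
  have hbase0 : (0 : ℝ) ≤ 2 * 3 ^ B := by linarith
  have h3eq : (2 + |((0 : ℤ) : ℝ)| + |((1 : ℤ) : ℝ)|) = (3 : ℝ) := by norm_num
  have h3eq' : (2 + |((1 : ℤ) : ℝ)| + |((0 : ℤ) : ℝ)|) = (3 : ℝ) := by norm_num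
  intro k₀ k₁ hk mz j
  have hsE := snormE_pos hε mz j
  match k₀, k₁ with
  | 0, 0 =>
    have e₁ : ζ₁ + ζ₂ - (2 * ((0 : ℕ) : ℝ) + ((0 : ℕ) : ℝ)) = ζ₁ + ζ₂ := by push_cast; ring
    have e₂ : ζ₁ - (2 * ((0 : ℕ) : ℝ) + ((0 : ℕ) : ℝ)) = ζ₁ := by push_cast; ring
    have e₃ : ζ₂ - (2 * ((0 : ℕ) : ℝ) + ((0 : ℕ) : ℝ)) = ζ₂ := by push_cast; ring
    have hid : fdiff ε 0 0 (fun a b => f a b * g a b) mz j = f mz j * g mz j := rfl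
    rw [hid, e₁]
    have h1 := hf 0 0 (by omega) mz j
    have h2 := hg 0 0 (by omega) mz j
    rw [e₂] at h1
    rw [e₃] at h2
    have hr : snormE ε mz j ^ (ζ₁ + ζ₂) = snormE ε mz j ^ ζ₁ * snormE ε mz j ^ ζ₂ :=
      Real.rpow_add hsE ζ₁ ζ₂
    calc |f mz j * g mz j| = |f mz j| * |g mz j| := abs_mul _ _
      _ ≤ (M₁ * snormE ε mz j ^ ζ₁) * (M₂ * snormE ε mz j ^ ζ₂) := by
          apply mul_le_mul h1 h2 (abs_nonneg _)
          positivity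
      _ = 1 * (M₁ * M₂ * snormE ε mz j ^ (ζ₁ + ζ₂)) := by rw [hr]; ring
      _ ≤ (2 * 3 ^ B) ^ m * M₁ * M₂ * snormE ε mz j ^ (ζ₁ + ζ₂) := by
          have hp : (1 : ℝ) ≤ (2 * 3 ^ B) ^ m := one_le_pow₀ hbase
          nlinarith [Real.rpow_nonneg hsE.le (ζ₁ + ζ₂), mul_nonneg hM₁ hM₂,
            mul_nonneg (mul_nonneg hM₁ hM₂) (Real.rpow_nonneg hsE.le (ζ₁ + ζ₂))]
  | k₀, k₁' + 1 =>
    obtain ⟨m', rfl⟩ : ∃ m', m = m' + 1 := ⟨m - 1, by omega⟩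
    have hm' : m' < m' + 1 := by omega
    -- first factor bounds
    have hf' : SingBound ε (ζ₁ - 1) m' M₁ (fdX ε f) := SingBound_fdX (by omega) hf
    have hg' : SingBound ε ζ₂ m' ((2 + |((0 : ℤ) : ℝ)| + |((1 : ℤ) : ℝ)|) ^ B * M₂)
        (sh 0 1 g) := SingBound_mono_m (by omega) (SingBound_sh hε hB₂ hg 0 1)
    have hf'' : SingBound ε ζ₁ m' M₁ f := SingBound_mono_m (by omega) hf
    have hg'' : SingBound ε (ζ₂ - 1) m' M₂ (fdX ε g) := SingBound_fdX (by omega) hg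
    have hBa : |ζ₁ - 1| + (m' : ℝ) ≤ B := by
      have := abs_sub ζ₁ (1 : ℝ)
      have hc : ((m' : ℕ) : ℝ) + 1 = ((m' + 1 : ℕ) : ℝ) := by push_cast; ring
      have := hB₁
      rw [← hc] at this
      calc |ζ₁ - 1| + (m' : ℝ) ≤ (|ζ₁| + |(1:ℝ)|) + (m' : ℝ) := by
            have := abs_sub ζ₁ (1 : ℝ); linarith
        _ = |ζ₁| + ((m' : ℝ) + 1) := by rw [abs_one]; ring
        _ ≤ B := this
    have hBb : |ζ₂| + (m' : ℝ) ≤ B := by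
      have hc : ((m' : ℕ) : ℝ) + 1 = ((m' + 1 : ℕ) : ℝ) := by push_cast; ring
      have := hB₂; rw [← hc] at this; linarith
    have hBc : |ζ₁| + (m' : ℝ) ≤ B := by
      have hc : ((m' : ℕ) : ℝ) + 1 = ((m' + 1 : ℕ) : ℝ) := by push_cast; ring
      have := hB₁; rw [← hc] at this; linarith
    have hBd : |ζ₂ - 1| + (m' : ℝ) ≤ B := by
      have hc : ((m' : ℕ) : ℝ) + 1 = ((m' + 1 : ℕ) : ℝ) := by push_cast; ring
      have := hB₂; rw [← hc] at this
      calc |ζ₂ - 1| + (m' : ℝ) ≤ (|ζ₂| + |(1:ℝ)|) + (m' : ℝ) := by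
            have := abs_sub ζ₂ (1 : ℝ); linarith
        _ = |ζ₂| + ((m' : ℝ) + 1) := by rw [abs_one]; ring
        _ ≤ B := this
    have IH₁ := IH m' hm' (ζ₁ - 1) ζ₂ M₁ ((2 + |((0 : ℤ) : ℝ)| + |((1 : ℤ) : ℝ)|) ^ B * M₂)
        hBa hBb (fdX ε f) (sh 0 1 g) hf' hg'
    have IH₂ := IH m' hm' ζ₁ (ζ₂ - 1) M₁ M₂ hBc hBd f (fdX ε g) hf'' hg''
    have hk' : 2 * k₀ + k₁' ≤ m' := by omega
    have T₁ := IH₁ k₀ k₁' hk' mz j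
    have T₂ := IH₂ k₀ k₁' hk' mz j
    rw [fdiff_succ_x, fdX_mul ε hε.ne' f g, fdiff_add]
    have e : ζ₁ - 1 + ζ₂ - (2 * (k₀ : ℝ) + ((k₁' : ℕ) : ℝ))
        = ζ₁ + ζ₂ - (2 * (k₀ : ℝ) + ((k₁' + 1 : ℕ) : ℝ)) := by push_cast; ring
    have e' : ζ₁ + (ζ₂ - 1) - (2 * (k₀ : ℝ) + ((k₁' : ℕ) : ℝ))
        = ζ₁ + ζ₂ - (2 * (k₀ : ℝ) + ((k₁' + 1 : ℕ) : ℝ)) := by push_cast; ring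
    rw [e] at T₁
    rw [e'] at T₂
    rw [h3eq] at T₁
    set q := ζ₁ + ζ₂ - (2 * (k₀ : ℝ) + ((k₁' + 1 : ℕ) : ℝ)) with hq
    have hsq : (0 : ℝ) ≤ snormE ε mz j ^ q := Real.rpow_nonneg hsE.le q
    calc |fdiff ε k₀ k₁' (fun a b => fdX ε f a b * sh 0 1 g a b) mz j
          + fdiff ε k₀ k₁' (fun a b => f a b * fdX ε g a b) mz j|
        ≤ |fdiff ε k₀ k₁' (fun a b => fdX ε f a b * sh 0 1 g a b) mz j|
          + |fdiff ε k₀ k₁' (fun a b => f a b * fdX ε g a b) mz j| := abs_add_le _ _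
      _ ≤ (2 * 3 ^ B) ^ m' * M₁ * (3 ^ B * M₂) * snormE ε mz j ^ q
          + (2 * 3 ^ B) ^ m' * M₁ * M₂ * snormE ε mz j ^ q := add_le_add T₁ T₂
      _ = (2 * 3 ^ B) ^ m' * (3 ^ B + 1) * M₁ * M₂ * snormE ε mz j ^ q := by ring
      _ ≤ (2 * 3 ^ B) ^ (m' + 1) * M₁ * M₂ * snormE ε mz j ^ q := by
          rw [pow_succ]
          have h1 := mul_le_mul_of_nonneg_left
            (show (3:ℝ) ^ B + 1 ≤ 2 * 3 ^ B by linarith) (pow_nonneg hbase0 m')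
          have hcn := mul_nonneg hM₁ (mul_nonneg hM₂ hsq)
          nlinarith [mul_le_mul_of_nonneg_right h1 hcn]
  | k₀' + 1, 0 =>
    obtain ⟨m', rfl⟩ : ∃ m', m = m' + 2 := ⟨m - 2, by omega⟩
    have hm' : m' < m' + 2 := by omega
    have hf' : SingBound ε (ζ₁ - 2) m' M₁ (fdT ε f) := SingBound_fdT (by omega) hf
    have hg' : SingBound ε ζ₂ m' ((2 + |((1 : ℤ) : ℝ)| + |((0 : ℤ) : ℝ)|) ^ B * M₂)
        (sh 1 0 g) := SingBound_mono_m (by omega) (SingBound_sh hε hB₂ hg 1 0)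
    have hf'' : SingBound ε ζ₁ m' M₁ f := SingBound_mono_m (by omega) hf
    have hg'' : SingBound ε (ζ₂ - 2) m' M₂ (fdT ε g) := SingBound_fdT (by omega) hg
    have hc : ((m' : ℕ) : ℝ) + 2 = ((m' + 2 : ℕ) : ℝ) := by push_cast; ring
    have hBa : |ζ₁ - 2| + (m' : ℝ) ≤ B := by
      have := hB₁; rw [← hc] at this
      calc |ζ₁ - 2| + (m' : ℝ) ≤ (|ζ₁| + |(2:ℝ)|) + (m' : ℝ) := by
            have := abs_sub ζ₁ (2 : ℝ); linarith
        _ = |ζ₁| + ((m' : ℝ) + 2) := by rw [abs_two]; ring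
        _ ≤ B := this
    have hBb : |ζ₂| + (m' : ℝ) ≤ B := by
      have := hB₂; rw [← hc] at this; linarith
    have hBc : |ζ₁| + (m' : ℝ) ≤ B := by
      have := hB₁; rw [← hc] at this; linarith
    have hBd : |ζ₂ - 2| + (m' : ℝ) ≤ B := by
      have := hB₂; rw [← hc] at this
      calc |ζ₂ - 2| + (m' : ℝ) ≤ (|ζ₂| + |(2:ℝ)|) + (m' : ℝ) := by
            have := abs_sub ζ₂ (2 : ℝ); linarith
        _ = |ζ₂| + ((m' : ℝ) + 2) := by rw [abs_two]; ring
        _ ≤ B := this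
    have IH₁ := IH m' hm' (ζ₁ - 2) ζ₂ M₁ ((2 + |((1 : ℤ) : ℝ)| + |((0 : ℤ) : ℝ)|) ^ B * M₂)
        hBa hBb (fdT ε f) (sh 1 0 g) hf' hg'
    have IH₂ := IH m' hm' ζ₁ (ζ₂ - 2) M₁ M₂ hBc hBd f (fdT ε g) hf'' hg''
    have hk' : 2 * k₀' + 0 ≤ m' := by omega
    have T₁ := IH₁ k₀' 0 hk' mz j
    have T₂ := IH₂ k₀' 0 hk' mz j
    rw [fdiff_succ_t, fdT_mul ε hε.ne' f g, fdiff_add]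
    have e : ζ₁ - 2 + ζ₂ - (2 * ((k₀' : ℕ) : ℝ) + ((0 : ℕ) : ℝ))
        = ζ₁ + ζ₂ - (2 * ((k₀' + 1 : ℕ) : ℝ) + ((0 : ℕ) : ℝ)) := by push_cast; ring
    have e' : ζ₁ + (ζ₂ - 2) - (2 * ((k₀' : ℕ) : ℝ) + ((0 : ℕ) : ℝ))
        = ζ₁ + ζ₂ - (2 * ((k₀' + 1 : ℕ) : ℝ) + ((0 : ℕ) : ℝ)) := by push_cast; ring
    rw [e] at T₁
    rw [e'] at T₂
    rw [h3eq'] at T₁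
    set q := ζ₁ + ζ₂ - (2 * ((k₀' + 1 : ℕ) : ℝ) + ((0 : ℕ) : ℝ)) with hq
    have hsq : (0 : ℝ) ≤ snormE ε mz j ^ q := Real.rpow_nonneg hsE.le q
    calc |fdiff ε k₀' 0 (fun a b => fdT ε f a b * sh 1 0 g a b) mz j
          + fdiff ε k₀' 0 (fun a b => f a b * fdT ε g a b) mz j|
        ≤ |fdiff ε k₀' 0 (fun a b => fdT ε f a b * sh 1 0 g a b) mz j|
          + |fdiff ε k₀' 0 (fun a b => f a b * fdT ε g a b) mz j| := abs_add_le _ _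
      _ ≤ (2 * 3 ^ B) ^ m' * M₁ * (3 ^ B * M₂) * snormE ε mz j ^ q
          + (2 * 3 ^ B) ^ m' * M₁ * M₂ * snormE ε mz j ^ q := add_le_add T₁ T₂
      _ = (2 * 3 ^ B) ^ m' * (3 ^ B + 1) * M₁ * M₂ * snormE ε mz j ^ q := by ring
      _ ≤ (2 * 3 ^ B) ^ (m' + 2) * M₁ * M₂ * snormE ε mz j ^ q := by
          rw [pow_succ, pow_succ]
          have h1 := mul_le_mul_of_nonneg_left
            (show (3:ℝ) ^ B + 1 ≤ 2 * 3 ^ B by linarith) (pow_nonneg hbase0 m')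
          have h2 : ((2:ℝ) * 3 ^ B) ^ m' * (2 * 3 ^ B)
              ≤ ((2:ℝ) * 3 ^ B) ^ m' * (2 * 3 ^ B) * (2 * 3 ^ B) := by
            nlinarith [mul_nonneg (pow_nonneg hbase0 m') hbase0]
          have h12 := le_trans h1 h2
          have hcn := mul_nonneg hM₁ (mul_nonneg hM₂ hsq)
          nlinarith [mul_le_mul_of_nonneg_right h12 hcn]

/-! ### sums -/

lemma fdT_zero (ε : ℝ) : fdT ε (fun _ _ => (0 : ℝ)) = fun _ _ => 0 := by
  funext a b; simp [fdT]

lemma fdX_zero (ε : ℝ) : fdX ε (fun _ _ => (0 : ℝ)) = fun _ _ => 0 := by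
  funext a b; simp [fdX]

lemma fdiff_zero (ε : ℝ) (k₀ k₁ : ℕ) :
    fdiff ε k₀ k₁ (fun _ _ => (0 : ℝ)) = fun _ _ => 0 := by
  unfold fdiff
  have hX : ∀ n, (fdX ε)^[n] (fun _ _ => (0 : ℝ)) = fun _ _ => 0 := by
    intro n
    induction n with
    | zero => rfl
    | succ n ih => rw [Function.iterate_succ_apply, fdX_zero, ih]
  have hT : ∀ n, (fdT ε)^[n] (fun _ _ => (0 : ℝ)) = fun _ _ => 0 := by
    intro n
    induction n with
    | zero => rfl
    | succ n ih => rw [Function.iterate_succ_apply, fdT_zero, ih]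
  rw [hX, hT]

lemma fdiff_sum {ι : Type*} (ε : ℝ) (k₀ k₁ : ℕ) (S : Finset ι) (F : ι → ℤ → ℤ → ℝ) :
    fdiff ε k₀ k₁ (fun a b => ∑ p ∈ S, F p a b)
      = fun a b => ∑ p ∈ S, fdiff ε k₀ k₁ (F p) a b := by
  classical
  induction S using Finset.induction_on with
  | empty => simp only [Finset.sum_empty]; exact fdiff_zero ε k₀ k₁
  | @insert x s hx ih =>
      have h1 : (fun a b => ∑ p ∈ insert x s, F p a b)
          = fun a b => F x a b + ∑ p ∈ s, F p a b := by
        funext a b; rw [Finset.sum_insert hx]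
      rw [h1, fdiff_add, ih]
      funext a b
      rw [Finset.sum_insert hx]

/-! ### the theorem -/

/-- the twisted product of two discrete singular kernels of orders
`ζ₁, ζ₂` is a discrete singular kernel of order `ζ₁ + ζ₂`, uniformly in `ε`. -/
theorem statement11 (c : (ℤ × ℤ) →₀ ℝ) (hc : ∀ k l : ℤ, c (k, l) = c (l, k))
    (ζ₁ ζ₂ : ℝ) (m : ℕ) (R : ℝ) (hR : 0 < R) :
    ∃ C : ℝ, 0 < C ∧
      ∀ (N : ℕ) (ε : ℝ), ε = ((2 : ℝ) ^ N)⁻¹ →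
      ∀ K₁ K₂ : ℤ → ℤ → ℝ, SuppIn ε R K₁ → SuppIn ε R K₂ →
      ∀ M₁ M₂ : ℝ, 0 ≤ M₁ → 0 ≤ M₂ →
        SingBound ε ζ₁ m M₁ K₁ → SingBound ε ζ₂ m M₂ K₂ →
        SingBound ε (ζ₁ + ζ₂) m (C * M₁ * M₂) (Bprod c K₁ K₂) := by
  classical
  have hB₁ : |ζ₁| + (m : ℝ) ≤ |ζ₁| + |ζ₂| + (m : ℝ) := by
    have := abs_nonneg ζ₂; linarith
  have hB₂ : |ζ₂| + (m : ℝ) ≤ |ζ₁| + |ζ₂| + (m : ℝ) := by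
    have := abs_nonneg ζ₁; linarith
  refine ⟨1 + ∑ p ∈ c.support,
      |c p| * (2 + |((0 : ℤ) : ℝ)| + |(p.1 : ℝ)|) ^ (|ζ₁| + |ζ₂| + (m : ℝ))
        * (2 + |((0 : ℤ) : ℝ)| + |(p.2 : ℝ)|) ^ (|ζ₁| + |ζ₂| + (m : ℝ))
        * (2 * 3 ^ (|ζ₁| + |ζ₂| + (m : ℝ))) ^ m, ?_, ?_⟩
  · have hs : (0 : ℝ) ≤ ∑ p ∈ c.support,
        |c p| * (2 + |((0 : ℤ) : ℝ)| + |(p.1 : ℝ)|) ^ (|ζ₁| + |ζ₂| + (m : ℝ))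
          * (2 + |((0 : ℤ) : ℝ)| + |(p.2 : ℝ)|) ^ (|ζ₁| + |ζ₂| + (m : ℝ))
          * (2 * 3 ^ (|ζ₁| + |ζ₂| + (m : ℝ))) ^ m := by
      apply Finset.sum_nonneg
      intro p _
      have h1 : (0 : ℝ) ≤ (2 + |((0 : ℤ) : ℝ)| + |(p.1 : ℝ)|) ^ (|ζ₁| + |ζ₂| + (m : ℝ)) :=
        Real.rpow_nonneg (by positivity) _
      have h2 : (0 : ℝ) ≤ (2 + |((0 : ℤ) : ℝ)| + |(p.2 : ℝ)|) ^ (|ζ₁| + |ζ₂| + (m : ℝ)) :=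
        Real.rpow_nonneg (by positivity) _
      have h3 : (0 : ℝ) ≤ (2 * 3 ^ (|ζ₁| + |ζ₂| + (m : ℝ))) ^ m := by
        apply pow_nonneg
        have : (0 : ℝ) ≤ (3 : ℝ) ^ (|ζ₁| + |ζ₂| + (m : ℝ)) := Real.rpow_nonneg (by norm_num) _
        linarith
      exact mul_nonneg (mul_nonneg (mul_nonneg (abs_nonneg _) h1) h2) h3
    linarith
  intro N ε hεdef K₁ K₂ _ _ M₁ M₂ hM₁ hM₂ h₁ h₂
  have hε : 0 < ε := by rw [hεdef]; positivity
  intro k₀ k₁ hk mz j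
  have hsE := snormE_pos hε mz j
  have hsq : (0 : ℝ) ≤ snormE ε mz j ^ (ζ₁ + ζ₂ - (2 * (k₀ : ℝ) + (k₁ : ℝ))) :=
    Real.rpow_nonneg hsE.le _
  have hBp : Bprod c K₁ K₂
      = fun a b => ∑ p ∈ c.support,
          (fun p (a' b' : ℤ) => c p * (sh 0 p.1 K₁ a' b' * sh 0 p.2 K₂ a' b')) p a b := by
    funext a b
    simp only [Bprod, sh, add_zero]
    exact Finset.sum_congr rfl (fun p _ => by ring)
  rw [hBp, fdiff_sum]
  have key : ∀ p ∈ c.support,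
      |fdiff ε k₀ k₁
          ((fun p (a' b' : ℤ) => c p * (sh 0 p.1 K₁ a' b' * sh 0 p.2 K₂ a' b')) p) mz j|
        ≤ (|c p| * (2 + |((0 : ℤ) : ℝ)| + |(p.1 : ℝ)|) ^ (|ζ₁| + |ζ₂| + (m : ℝ))
            * (2 + |((0 : ℤ) : ℝ)| + |(p.2 : ℝ)|) ^ (|ζ₁| + |ζ₂| + (m : ℝ))
            * (2 * 3 ^ (|ζ₁| + |ζ₂| + (m : ℝ))) ^ m)
          * (M₁ * M₂ * snormE ε mz j ^ (ζ₁ + ζ₂ - (2 * (k₀ : ℝ) + (k₁ : ℝ)))) := by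
    intro p _
    have hK1 := SingBound_sh hε hB₁ h₁ 0 p.1
    have hK2 := SingBound_sh hε hB₂ h₂ 0 p.2
    have hprod := mul_bound ε (|ζ₁| + |ζ₂| + (m : ℝ)) hε m ζ₁ ζ₂ _ _ hB₁ hB₂
      (sh 0 p.1 K₁) (sh 0 p.2 K₂) hK1 hK2 k₀ k₁ hk mz j
    have hspl := fdiff_smul ε (c p) k₀ k₁
      (fun a b => sh 0 p.1 K₁ a b * sh 0 p.2 K₂ a b)
    calc |fdiff ε k₀ k₁
            (fun a' b' => c p * (sh 0 p.1 K₁ a' b' * sh 0 p.2 K₂ a' b')) mz j|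
        = |c p * fdiff ε k₀ k₁
            (fun a b => sh 0 p.1 K₁ a b * sh 0 p.2 K₂ a b) mz j| := by rw [hspl]
      _ = |c p| * |fdiff ε k₀ k₁
            (fun a b => sh 0 p.1 K₁ a b * sh 0 p.2 K₂ a b) mz j| := abs_mul _ _
      _ ≤ |c p| * ((2 * 3 ^ (|ζ₁| + |ζ₂| + (m : ℝ))) ^ m
            * ((2 + |((0 : ℤ) : ℝ)| + |(p.1 : ℝ)|) ^ (|ζ₁| + |ζ₂| + (m : ℝ)) * M₁)
            * ((2 + |((0 : ℤ) : ℝ)| + |(p.2 : ℝ)|) ^ (|ζ₁| + |ζ₂| + (m : ℝ)) * M₂)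
            * snormE ε mz j ^ (ζ₁ + ζ₂ - (2 * (k₀ : ℝ) + (k₁ : ℝ)))) :=
          mul_le_mul_of_nonneg_left hprod (abs_nonneg _)
      _ = (|c p| * (2 + |((0 : ℤ) : ℝ)| + |(p.1 : ℝ)|) ^ (|ζ₁| + |ζ₂| + (m : ℝ))
            * (2 + |((0 : ℤ) : ℝ)| + |(p.2 : ℝ)|) ^ (|ζ₁| + |ζ₂| + (m : ℝ))
            * (2 * 3 ^ (|ζ₁| + |ζ₂| + (m : ℝ))) ^ m)
          * (M₁ * M₂ * snormE ε mz j ^ (ζ₁ + ζ₂ - (2 * (k₀ : ℝ) + (k₁ : ℝ)))) := by ring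
  calc |(fun a b => ∑ p ∈ c.support, fdiff ε k₀ k₁
          ((fun p (a' b' : ℤ) => c p * (sh 0 p.1 K₁ a' b' * sh 0 p.2 K₂ a' b')) p) a b) mz j|
      = |∑ p ∈ c.support, fdiff ε k₀ k₁
          ((fun p (a' b' : ℤ) => c p * (sh 0 p.1 K₁ a' b' * sh 0 p.2 K₂ a' b')) p) mz j| := rfl
    _ ≤ ∑ p ∈ c.support, |fdiff ε k₀ k₁
          ((fun p (a' b' : ℤ) => c p * (sh 0 p.1 K₁ a' b' * sh 0 p.2 K₂ a' b')) p) mz j| :=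
        Finset.abs_sum_le_sum_abs _ _
    _ ≤ ∑ p ∈ c.support,
          (|c p| * (2 + |((0 : ℤ) : ℝ)| + |(p.1 : ℝ)|) ^ (|ζ₁| + |ζ₂| + (m : ℝ))
            * (2 + |((0 : ℤ) : ℝ)| + |(p.2 : ℝ)|) ^ (|ζ₁| + |ζ₂| + (m : ℝ))
            * (2 * 3 ^ (|ζ₁| + |ζ₂| + (m : ℝ))) ^ m)
          * (M₁ * M₂ * snormE ε mz j ^ (ζ₁ + ζ₂ - (2 * (k₀ : ℝ) + (k₁ : ℝ)))) :=
        Finset.sum_le_sum key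
    _ = (∑ p ∈ c.support,
          |c p| * (2 + |((0 : ℤ) : ℝ)| + |(p.1 : ℝ)|) ^ (|ζ₁| + |ζ₂| + (m : ℝ))
            * (2 + |((0 : ℤ) : ℝ)| + |(p.2 : ℝ)|) ^ (|ζ₁| + |ζ₂| + (m : ℝ))
            * (2 * 3 ^ (|ζ₁| + |ζ₂| + (m : ℝ))) ^ m)
          * (M₁ * M₂ * snormE ε mz j ^ (ζ₁ + ζ₂ - (2 * (k₀ : ℝ) + (k₁ : ℝ)))) :=
        (Finset.sum_mul _ _ _).symm
    _ ≤ (1 + ∑ p ∈ c.support,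
          |c p| * (2 + |((0 : ℤ) : ℝ)| + |(p.1 : ℝ)|) ^ (|ζ₁| + |ζ₂| + (m : ℝ))
            * (2 + |((0 : ℤ) : ℝ)| + |(p.2 : ℝ)|) ^ (|ζ₁| + |ζ₂| + (m : ℝ))
            * (2 * 3 ^ (|ζ₁| + |ζ₂| + (m : ℝ))) ^ m)
          * M₁ * M₂ * snormE ε mz j ^ (ζ₁ + ζ₂ - (2 * (k₀ : ℝ) + (k₁ : ℝ))) := by
        have hcn : (0 : ℝ) ≤ M₁ * M₂ * snormE ε mz j ^ (ζ₁ + ζ₂ - (2 * (k₀ : ℝ) + (k₁ : ℝ))) :=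
          mul_nonneg (mul_nonneg hM₁ hM₂) hsq
        nlinarith [hcn]
end
end
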